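/- For indices i ∈ {1,…,D} and j ∈ {1,…,R}, the real function f(t) = ℓ evaluated with the entry V_{ij} of V replaced by t (keeping all other entries of A, V, μ fixed) is differentiable at t = V_{ij} and its derivative equals (Σ·V)_{ij} − r_i·(Vᵀ·r)_j, where Σ = Ω⁻¹ and r = y − μ. -/

import Mathlib

open Matrix

/-- Multivariate Gaussian log-likelihood in the low-rank precision parametrization
`Ω = A + V·Vᵀ` with `A = diagonal a`:
`ℓ = -(D/2)·log(2π) + (1/2)·log(det Ω) - (1/2)·(y-μ)ᵀ Ω (y-μ)`. -/
noncomputable def gaussLRLL (D R : ℕ) (y μ : Fin D → ℝ) (a : Fin D → ℝ)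
    (V : Matrix (Fin D) (Fin R) ℝ) : ℝ :=
  -((D : ℝ) / 2) * Real.log (2 * Real.pi)
    + (1 / 2) * Real.log (Matrix.diagonal a + V * V.transpose).det
    - (1 / 2) * ((y - μ) ⬝ᵥ (Matrix.diagonal a + V * V.transpose).mulVec (y - μ))

/-- The matrix `V` with its `(i,j)`-entry replaced by `t`. -/
def updEntryV {D R : ℕ} (V : Matrix (Fin D) (Fin R) ℝ) (i : Fin D) (j : Fin R) (t : ℝ) :
    Matrix (Fin D) (Fin R) ℝ :=
  Matrix.of fun k l => if k = i ∧ l = j then t else V k l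

/-! Moving the entry `V i j` moves the precision `Ω = A + V Vᵀ` with velocity `B = E Vᵀ + V Eᵀ`,
where `E` is the matrix unit at `(i, j)`. By Jacobi's formula the log-determinant moves with
`tr (Ω⁻¹ B) = 2 (Ω⁻¹ V)_{ij}`, by the symmetry of `Ω⁻¹`, and the quadratic form with
`rᵀ B r = 2 r_i (Vᵀ r)_j`; halving both gives the claim. -/

section MatrixCalculus

variable {𝕜 : Type*} [NontriviallyNormedField 𝕜] {m n p : Type*} [Fintype n] {t : 𝕜}

theorem hasDerivAt_matrix_mul_apply {A : 𝕜 → Matrix m n 𝕜} {B : 𝕜 → Matrix n p 𝕜}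
    {A' : Matrix m n 𝕜} {B' : Matrix n p 𝕜}
    (hA : ∀ k l, HasDerivAt (fun s => A s k l) (A' k l) t)
    (hB : ∀ k l, HasDerivAt (fun s => B s k l) (B' k l) t) (k : m) (l : p) :
    HasDerivAt (fun s => (A s * B s) k l) ((A' * B t + A t * B') k l) t := by
  simp only [mul_apply, Matrix.add_apply, ← Finset.sum_add_distrib]
  exact HasDerivAt.fun_sum fun r _ => (hA k r).fun_mul (hB r l)

theorem hasDerivAt_dotProduct_mulVec [Fintype m] {M : 𝕜 → Matrix m n 𝕜} {M' : Matrix m n 𝕜}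
    (hM : ∀ k l, HasDerivAt (fun s => M s k l) (M' k l) t) (x : m → 𝕜) (y : n → 𝕜) :
    HasDerivAt (fun s => x ⬝ᵥ M s *ᵥ y) (x ⬝ᵥ M' *ᵥ y) t := by
  simp only [dotProduct, mulVec, Finset.mul_sum]
  exact HasDerivAt.fun_sum fun k _ => HasDerivAt.fun_sum fun l _ =>
    ((hM k l).mul_const (y l)).const_mul (x k)

theorem det_updateCol_eq_sum_perm [DecidableEq n] (M : Matrix n n 𝕜) (p : n) (v : n → 𝕜) :
    (M.updateCol p v).det
      = ∑ σ : Equiv.Perm n,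
          (Equiv.Perm.sign σ : 𝕜) * ((∏ k ∈ Finset.univ.erase p, M (σ k) k) * v (σ p)) := by
  rw [det_apply]
  refine Finset.sum_congr rfl fun σ _ => ?_
  rw [Units.smul_def, zsmul_eq_mul, ← Finset.prod_erase_mul _ _ (Finset.mem_univ p),
    updateCol_self]
  congr 2
  exact Finset.prod_congr rfl fun k hk => by rw [updateCol_ne (Finset.ne_of_mem_erase hk)]

theorem hasDerivAt_det [DecidableEq n] {M : 𝕜 → Matrix n n 𝕜} {M' : Matrix n n 𝕜}
    (hM : ∀ k l, HasDerivAt (fun s => M s k l) (M' k l) t) :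
    HasDerivAt (fun s => (M s).det) (trace (adjugate (M t) * M')) t := by
  have hcols : trace (adjugate (M t) * M') = ∑ p, ((M t).updateCol p fun k => M' k p).det := by
    refine Finset.sum_congr rfl fun p _ => ?_
    rw [← cramer_apply, cramer_eq_adjugate_mulVec]
    rfl
  simp only [hcols, det_updateCol_eq_sum_perm]
  simp only [det_apply, Units.smul_def, zsmul_eq_mul]
  rw [Finset.sum_comm]
  refine HasDerivAt.fun_sum fun σ _ => ?_
  simpa only [Finset.mul_sum, smul_eq_mul] using
    (HasDerivAt.fun_finsetProd fun k _ => hM (σ k) k).const_mul (Equiv.Perm.sign σ : 𝕜)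

end MatrixCalculus

theorem hasDerivAt_log_det {n : Type*} [Fintype n] [DecidableEq n] {M : ℝ → Matrix n n ℝ}
    {M' : Matrix n n ℝ} {t : ℝ} (hM : ∀ k l, HasDerivAt (fun s => M s k l) (M' k l) t)
    (hdet : (M t).det ≠ 0) :
    HasDerivAt (fun s => Real.log (M s).det) (trace ((M t)⁻¹ * M')) t := by
  convert (hasDerivAt_det hM).log hdet using 1
  rw [inv_def, Ring.inverse_eq_inv', smul_mul, trace_smul, smul_eq_mul, div_eq_inv_mul]

section LowRankPrecision

variable {n r : Type*} [Fintype n] [DecidableEq n] [Fintype r]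

theorem posDef_diagonal_add_mul_transpose {a : n → ℝ} (ha : ∀ k, 0 < a k) (V : Matrix n r ℝ) :
    (diagonal a + V * Vᵀ).PosDef := by
  refine (posDef_diagonal_iff.mpr ha).add_posSemidef ?_
  simpa only [conjTranspose_eq_transpose_of_trivial] using posSemidef_self_mul_conjTranspose V

variable [DecidableEq r]

theorem trace_mul_single_mul_transpose_add {R : Type*} [CommRing R] {S : Matrix n n R}
    (hS : Sᵀ = S) (V : Matrix n r R) (i : n) (j : r) :
    trace (S * (single i j (1 : R) * Vᵀ + V * (single i j (1 : R))ᵀ)) = 2 * (S * V) i j := by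
  have hleft : trace (S * (single i j (1 : R) * Vᵀ)) = (S * V) i j := by
    rw [← Matrix.mul_assoc, trace_mul_comm, ← Matrix.mul_assoc, trace_mul_single,
      MulOpposite.op_one, one_smul, ← transpose_apply (Vᵀ * S), transpose_mul,
      transpose_transpose, hS]
  have hright : trace (S * (V * (single i j (1 : R))ᵀ)) = (S * V) i j := by
    rw [transpose_single, ← Matrix.mul_assoc, trace_mul_single]
    simp
  rw [Matrix.mul_add, trace_add, hleft, hright, two_mul]

theorem dotProduct_single_mul_transpose_add_mulVec {R : Type*} [CommRing R] (x : n → R)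
    (V : Matrix n r R) (i : n) (j : r) :
    x ⬝ᵥ (single i j (1 : R) * Vᵀ + V * (single i j (1 : R))ᵀ) *ᵥ x
      = 2 * (x i * (Vᵀ *ᵥ x) j) := by
  rw [add_mulVec, dotProduct_add, ← mulVec_mulVec, ← mulVec_mulVec, dotProduct_mulVec x V,
    ← mulVec_transpose, transpose_single, single_mulVec, single_mulVec]
  simp [dotProduct, Function.update_apply]
  ring

end LowRankPrecision

theorem hasDerivAt_updEntryV_apply {D R : ℕ} (V : Matrix (Fin D) (Fin R) ℝ) (i : Fin D)
    (j : Fin R) (t : ℝ) (k : Fin D) (l : Fin R) :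
    HasDerivAt (fun s => updEntryV V i j s k l) (single i j (1 : ℝ) k l) t := by
  rcases em (k = i ∧ l = j) with ⟨rfl, rfl⟩ | h
  · simpa only [updEntryV, single, of_apply, and_self, if_true] using hasDerivAt_id' t
  · have h' : ¬(i = k ∧ j = l) := fun ⟨hi, hj⟩ => h ⟨hi.symm, hj.symm⟩
    simpa only [updEntryV, single, of_apply, if_neg h, if_neg h'] using
      hasDerivAt_const t (V k l)

theorem updEntryV_self {D R : ℕ} (V : Matrix (Fin D) (Fin R) ℝ) (i : Fin D) (j : Fin R) :
    updEntryV V i j (V i j) = V := by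
  ext k l
  by_cases h : k = i ∧ l = j
  · obtain ⟨rfl, rfl⟩ := h
    simp [updEntryV]
  · simp [updEntryV, h]

theorem hasDerivAt_gaussLRLL {D R : ℕ} (y μ : Fin D → ℝ) {a : Fin D → ℝ} (ha : ∀ k, 0 < a k)
    {W : ℝ → Matrix (Fin D) (Fin R) ℝ} {W' : Matrix (Fin D) (Fin R) ℝ} {t : ℝ}
    (hW : ∀ k l, HasDerivAt (fun s => W s k l) (W' k l) t) :
    HasDerivAt (fun s => gaussLRLL D R y μ a (W s))
      (1 / 2 * trace ((diagonal a + W t * (W t)ᵀ)⁻¹ * (W' * (W t)ᵀ + W t * W'ᵀ))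
        - 1 / 2 * ((y - μ) ⬝ᵥ (W' * (W t)ᵀ + W t * W'ᵀ) *ᵥ (y - μ))) t := by
  have hΩ : ∀ k l, HasDerivAt (fun s => (diagonal a + W s * (W s)ᵀ) k l)
      ((W' * (W t)ᵀ + W t * W'ᵀ) k l) t := fun k l => by
    simpa only [Matrix.add_apply, zero_add] using
      (hasDerivAt_const t (diagonal a k l)).fun_add
        (hasDerivAt_matrix_mul_apply (B := fun s => (W s)ᵀ) (B' := W'ᵀ) hW
          (fun k l => hW l k) k l)
  have hdet := (posDef_diagonal_add_mul_transpose ha (W t)).det_pos.ne'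
  simpa only [gaussLRLL, zero_add] using
    ((hasDerivAt_const t (-((D : ℝ) / 2) * Real.log (2 * Real.pi))).fun_add
      ((hasDerivAt_log_det hΩ hdet).const_mul (1 / 2))).fun_sub
      ((hasDerivAt_dotProduct_mulVec hΩ _ _).const_mul (1 / 2))

theorem gaussLR_deriv_V_general (D R : ℕ) (y μ : Fin D → ℝ)
    (a : Fin D → ℝ) (ha : ∀ k, 0 < a k)
    (V : Matrix (Fin D) (Fin R) ℝ) (i : Fin D) (j : Fin R) :
    HasDerivAt (fun t : ℝ => gaussLRLL D R y μ a (updEntryV V i j t))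
      (((Matrix.diagonal a + V * V.transpose)⁻¹ * V) i j
        - (y i - μ i) * V.transpose.mulVec (y - μ) j)
      (V i j) := by
  have hderiv := hasDerivAt_gaussLRLL y μ ha (hasDerivAt_updEntryV_apply V i j (V i j))
  rw [updEntryV_self] at hderiv
  have hsymm : (diagonal a + V * Vᵀ)⁻¹ᵀ = (diagonal a + V * Vᵀ)⁻¹ := by
    rw [transpose_nonsing_inv, transpose_add, transpose_mul, transpose_transpose,
      diagonal_transpose]
  convert hderiv using 1
  rw [trace_mul_single_mul_transpose_add hsymm, dotProduct_single_mul_transpose_add_mulVec]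
  simp only [Pi.sub_apply]
  ring

/-- First partial derivative of the low-rank Gaussian log-likelihood with respect to the
entry `V_{ij}`: it equals `(Σ·V)_{ij} - r_i·(Vᵀ·r)_j` where `Σ = Ω⁻¹` and `r = y - μ`. -/
theorem gaussLR_deriv_V (D R : ℕ) (hD : 1 ≤ D) (y μ : Fin D → ℝ)
    (a : Fin D → ℝ) (ha : ∀ k, 0 < a k)
    (V : Matrix (Fin D) (Fin R) ℝ) (i : Fin D) (j : Fin R) :
    HasDerivAt (fun t : ℝ => gaussLRLL D R y μ a (updEntryV V i j t))
      (((Matrix.diagonal a + V * V.transpose)⁻¹ * V) i j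
        - (y i - μ i) * V.transpose.mulVec (y - μ) j)
      (V i j) :=
  gaussLR_deriv_V_general D R y μ a ha V i j
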